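/- arXiv:2410.02728 — 2 statements merged into one kernel-verified Lean document; each statement's English description precedes it below -/
import Mathlib

section
/- The commutator identity: for f, g ∈ L²_loc(ℝ^d) and a standard mollifier ρ, for all x at distance greater than ε from the complement of the domain of definition, (fg)_ε(x) − f_ε(x)g_ε(x) = ∫_{B₁} (f(x−εy)−f(x))(g(x−εy)−g(x)) ρ(y) dy − (∫_{B₁}(f(x−εy)−f(x))ρ(y)dy)(∫_{B₁}(g(x−εy)−g(x))ρ(y)dy). -/
open MeasureTheory Metric Set
open scoped ENNReal NNReal Topology

lemma stmt9_key {d : ℕ} (ρ : EuclideanSpace ℝ (Fin d) → ℝ) (hρc : Continuous ρ)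
    (hρsupp : Function.support ρ ⊆ ball 0 1)
    (h : EuclideanSpace ℝ (Fin d) → ℝ)
    (hloc : LocallyIntegrable h volume) {ε : ℝ} (hε : 0 < ε)
    (x : EuclideanSpace ℝ (Fin d)) :
    Integrable (fun y => h (x - ε • y) * ρ y) volume := by
  have hH : IntegrableOn (fun z : EuclideanSpace ℝ (Fin d) => h (x - z)) (ball 0 ε) volume := by
    have hmp : MeasurePreserving (fun t : EuclideanSpace ℝ (Fin d) => x - t) volume volume :=
      Measure.measurePreserving_sub_left volume x
    have hemb : MeasurableEmbedding (fun t : EuclideanSpace ℝ (Fin d) => x - t) :=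
      (MeasurableEquiv.subLeft x).measurableEmbedding
    have := (hmp.integrableOn_comp_preimage hemb
      (f := h) (s := ball x ε)).2 ((hloc.integrableOn_isCompact
        (isCompact_closedBall x ε)).mono_set ball_subset_closedBall)
    have hpre : (fun t : EuclideanSpace ℝ (Fin d) => x - t) ⁻¹' ball x ε = ball 0 ε := by
      ext z
      simp [mem_ball, dist_eq_norm]
    rwa [hpre] at this
  obtain ⟨C, hC⟩ : ∃ C, ∀ y, ‖ρ y‖ ≤ C := by
    have hcs : HasCompactSupport ρ := HasCompactSupport.of_support_subset_isCompact
      (isCompact_closedBall (0 : EuclideanSpace ℝ (Fin d)) 1)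
      (hρsupp.trans ball_subset_closedBall)
    obtain ⟨C, hC⟩ := hρc.norm.bounded_above_of_compact_support hcs.norm
    exact ⟨C, fun y => by simpa using hC y⟩
  set Φ : EuclideanSpace ℝ (Fin d) → ℝ := fun z => h (x - z) * ρ (ε⁻¹ • z) with hΦ
  have hΦint : Integrable Φ volume := by
    have hind : Φ = (ball (0 : EuclideanSpace ℝ (Fin d)) ε).indicator Φ := by
      ext z
      rcases eq_or_ne (Φ z) 0 with h0 | h0
      · by_cases hz : z ∈ ball (0 : EuclideanSpace ℝ (Fin d)) ε <;> simp [hz, h0]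
      · have hρz : ρ (ε⁻¹ • z) ≠ 0 := fun hc => h0 (by simp [hΦ, hc])
        have : ε⁻¹ • z ∈ ball (0 : EuclideanSpace ℝ (Fin d)) 1 := hρsupp hρz
        have hz : z ∈ ball (0 : EuclideanSpace ℝ (Fin d)) ε := by
          rw [mem_ball_zero_iff] at this ⊢
          rw [norm_smul, norm_inv, Real.norm_eq_abs, abs_of_pos hε] at this
          calc ‖z‖ = ε * (ε⁻¹ * ‖z‖) := by field_simp
          _ < ε * 1 := by exact mul_lt_mul_of_pos_left this hε
          _ = ε := mul_one ε
        simp [hz]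
    rw [hind, integrable_indicator_iff measurableSet_ball]
    have : Integrable (fun z : EuclideanSpace ℝ (Fin d) => ρ (ε⁻¹ • z) * h (x - z))
        (volume.restrict (ball (0 : EuclideanSpace ℝ (Fin d)) ε)) := by
      refine Integrable.bdd_mul (c := C) hH ?_ ?_
      · exact ((hρc.comp (continuous_const_smul _)).aestronglyMeasurable).restrict
      · exact Filter.Eventually.of_forall fun y => hC _
    simpa [hΦ, mul_comm, IntegrableOn] using this
  have := hΦint.comp_smul (ne_of_gt hε)
  have heq : (fun y : EuclideanSpace ℝ (Fin d) => Φ (ε • y))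
      = fun y => h (x - ε • y) * ρ y := by
    ext y
    simp [hΦ, inv_smul_smul₀ (ne_of_gt hε)]
  rwa [heq] at this

/-- the Constantin–E–Titi commutator identity. For `f, g ∈ L²_loc(ℝ^d)` and
a standard mollifier `ρ` (supported in the unit ball, with integral 1), for every `x` and
`ε > 0` (written in the rescaled form `h_ε(x) = ∫_{B₁} h(x-εy) ρ(y) dy`):
`(fg)_ε(x) - f_ε(x) g_ε(x) = ∫_{B₁} (f(x-εy)-f(x))(g(x-εy)-g(x)) ρ(y) dy
  - (∫_{B₁} (f(x-εy)-f(x)) ρ(y) dy) (∫_{B₁} (g(x-εy)-g(x)) ρ(y) dy)`. -/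
theorem stmt9 (d : ℕ)
    (ρ : EuclideanSpace ℝ (Fin d) → ℝ) (hρsmooth : ContDiff ℝ (⊤ : ℕ∞) ρ) (hρnonneg : ∀ x, 0 ≤ ρ x)
    (hρsupp : Function.support ρ ⊆ ball 0 1) (hρint : ∫ x, ρ x = 1)
    (f g : EuclideanSpace ℝ (Fin d) → ℝ) (hf : Measurable f) (hg : Measurable g)
    (hf2 : MeasureTheory.LocallyIntegrable (fun x => f x ^ 2) volume)
    (hg2 : MeasureTheory.LocallyIntegrable (fun x => g x ^ 2) volume)
    (ε : ℝ) (hε : 0 < ε) (x : EuclideanSpace ℝ (Fin d)) :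
    (∫ y in ball (0 : EuclideanSpace ℝ (Fin d)) 1, f (x - ε • y) * g (x - ε • y) * ρ y)
      - (∫ y in ball (0 : EuclideanSpace ℝ (Fin d)) 1, f (x - ε • y) * ρ y)
        * (∫ y in ball (0 : EuclideanSpace ℝ (Fin d)) 1, g (x - ε • y) * ρ y)
    = (∫ y in ball (0 : EuclideanSpace ℝ (Fin d)) 1,
        (f (x - ε • y) - f x) * (g (x - ε • y) - g x) * ρ y)
      - (∫ y in ball (0 : EuclideanSpace ℝ (Fin d)) 1, (f (x - ε • y) - f x) * ρ y)
        * (∫ y in ball (0 : EuclideanSpace ℝ (Fin d)) 1, (g (x - ε • y) - g x) * ρ y) := by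
  have hρc : Continuous ρ := hρsmooth.continuous
  -- locally integrable facts
  have locf : LocallyIntegrable f volume := by
    rw [locallyIntegrable_iff]
    intro K hK
    have hmaj : IntegrableOn (fun z => 1 + f z ^ 2) K volume :=
      (integrableOn_const hK.measure_lt_top.ne).add (hf2.integrableOn_isCompact hK)
    exact hmaj.mono' hf.aestronglyMeasurable.restrict
      (Filter.Eventually.of_forall fun z => by
        rw [Real.norm_eq_abs]
        nlinarith [sq_nonneg (|f z| - 1), sq_abs (f z), abs_nonneg (f z)])
  have locg : LocallyIntegrable g volume := by
    rw [locallyIntegrable_iff]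
    intro K hK
    have hmaj : IntegrableOn (fun z => 1 + g z ^ 2) K volume :=
      (integrableOn_const hK.measure_lt_top.ne).add (hg2.integrableOn_isCompact hK)
    exact hmaj.mono' hg.aestronglyMeasurable.restrict
      (Filter.Eventually.of_forall fun z => by
        rw [Real.norm_eq_abs]
        nlinarith [sq_nonneg (|g z| - 1), sq_abs (g z), abs_nonneg (g z)])
  have locfg : LocallyIntegrable (fun z => f z * g z) volume := by
    rw [locallyIntegrable_iff]
    intro K hK
    have hmaj : IntegrableOn (fun z => f z ^ 2 + g z ^ 2) K volume :=
      (hf2.integrableOn_isCompact hK).add (hg2.integrableOn_isCompact hK)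
    exact hmaj.mono' (hf.mul hg).aestronglyMeasurable.restrict
      (Filter.Eventually.of_forall fun z => by
        rw [Real.norm_eq_abs, abs_mul]
        nlinarith [sq_nonneg (|f z| - |g z|), sq_abs (f z), sq_abs (g z)])
  -- integrability of the integrands on the ball
  have hFρ : IntegrableOn (fun y => f (x - ε • y) * ρ y)
      (ball (0 : EuclideanSpace ℝ (Fin d)) 1) volume :=
    (stmt9_key ρ hρc hρsupp f locf hε x).integrableOn
  have hGρ : IntegrableOn (fun y => g (x - ε • y) * ρ y)
      (ball (0 : EuclideanSpace ℝ (Fin d)) 1) volume :=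
    (stmt9_key ρ hρc hρsupp g locg hε x).integrableOn
  have hFGρ : IntegrableOn (fun y => f (x - ε • y) * g (x - ε • y) * ρ y)
      (ball (0 : EuclideanSpace ℝ (Fin d)) 1) volume :=
    (stmt9_key ρ hρc hρsupp (fun z => f z * g z) locfg hε x).integrableOn
  have hρI : IntegrableOn ρ (ball (0 : EuclideanSpace ℝ (Fin d)) 1) volume := by
    have hcs : HasCompactSupport ρ := HasCompactSupport.of_support_subset_isCompact
      (isCompact_closedBall _ 1) (hρsupp.trans ball_subset_closedBall)
    exact (hρc.integrable_of_hasCompactSupport hcs).integrableOn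
  have hρball : (∫ y in ball (0 : EuclideanSpace ℝ (Fin d)) 1, ρ y) = 1 := by
    rw [setIntegral_eq_integral_of_forall_compl_eq_zero
      (fun y hy => Function.notMem_support.1 (fun hs => hy (hρsupp hs)))]
    exact hρint
  set a := f x
  set b := g x
  -- compute the three right-hand-side integrals
  have h2 : (∫ y in ball (0 : EuclideanSpace ℝ (Fin d)) 1, (f (x - ε • y) - a) * ρ y)
      = (∫ y in ball (0 : EuclideanSpace ℝ (Fin d)) 1, f (x - ε • y) * ρ y) - a := by
    have : (fun y : EuclideanSpace ℝ (Fin d) => (f (x - ε • y) - a) * ρ y)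
        = fun y => f (x - ε • y) * ρ y - a * ρ y := by
      ext y; ring
    rw [this, integral_sub hFρ (hρI.const_mul a), integral_const_mul, hρball, mul_one]
  have h3 : (∫ y in ball (0 : EuclideanSpace ℝ (Fin d)) 1, (g (x - ε • y) - b) * ρ y)
      = (∫ y in ball (0 : EuclideanSpace ℝ (Fin d)) 1, g (x - ε • y) * ρ y) - b := by
    have : (fun y : EuclideanSpace ℝ (Fin d) => (g (x - ε • y) - b) * ρ y)
        = fun y => g (x - ε • y) * ρ y - b * ρ y := by
      ext y; ring
    rw [this, integral_sub hGρ (hρI.const_mul b), integral_const_mul, hρball, mul_one]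
  have h1 : (∫ y in ball (0 : EuclideanSpace ℝ (Fin d)) 1,
        (f (x - ε • y) - a) * (g (x - ε • y) - b) * ρ y)
      = (∫ y in ball (0 : EuclideanSpace ℝ (Fin d)) 1, f (x - ε • y) * g (x - ε • y) * ρ y)
        - a * (∫ y in ball (0 : EuclideanSpace ℝ (Fin d)) 1, g (x - ε • y) * ρ y)
        - b * (∫ y in ball (0 : EuclideanSpace ℝ (Fin d)) 1, f (x - ε • y) * ρ y)
        + a * b := by
    have heq : (fun y : EuclideanSpace ℝ (Fin d) =>
        (f (x - ε • y) - a) * (g (x - ε • y) - b) * ρ y)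
        = fun y => f (x - ε • y) * g (x - ε • y) * ρ y - a * (g (x - ε • y) * ρ y)
          - b * (f (x - ε • y) * ρ y) + (a * b) * ρ y := by
      ext y; ring
    have i1 : IntegrableOn (fun y => a * (g (x - ε • y) * ρ y))
        (ball (0 : EuclideanSpace ℝ (Fin d)) 1) volume := hGρ.const_mul a
    have i2 : IntegrableOn (fun y => b * (f (x - ε • y) * ρ y))
        (ball (0 : EuclideanSpace ℝ (Fin d)) 1) volume := hFρ.const_mul b
    have i3 : IntegrableOn (fun y => f (x - ε • y) * g (x - ε • y) * ρ y
        - a * (g (x - ε • y) * ρ y)) (ball (0 : EuclideanSpace ℝ (Fin d)) 1) volume :=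
      hFGρ.sub i1
    have i4 : IntegrableOn (fun y => f (x - ε • y) * g (x - ε • y) * ρ y
        - a * (g (x - ε • y) * ρ y) - b * (f (x - ε • y) * ρ y))
        (ball (0 : EuclideanSpace ℝ (Fin d)) 1) volume := i3.sub i2
    have i5 : IntegrableOn (fun y => (a * b) * ρ y)
        (ball (0 : EuclideanSpace ℝ (Fin d)) 1) volume := hρI.const_mul (a * b)
    rw [heq, integral_add i4 i5, integral_sub i3 i2, integral_sub hFGρ i1,
      integral_const_mul, integral_const_mul, integral_const_mul, hρball, mul_one]
  rw [h1, h2, h3]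
  ring
end

section
/- Let H: [0,T] → ℝ be a function that is Hölder continuous of exponent σ ∈ (0,1] and is locally constant on the complement of the support of its distributional derivative H'. Suppose the Hausdorff dimension of Spt(H') is strictly less than σ. Then H is constant on [0,T]. -/
open Set
open scoped ENNReal Topology
open MeasureTheory

/-!
On `K` the function `H` is `σ`-Hölder and `μH[σ] K = 0`, so `H '' K` has vanishing
one-dimensional Hausdorff measure, i.e. it is Lebesgue-null. Off `K` the function is locally
constant, so each of its values there is attained at a point of a countable dense subset of
`[0,T]`; hence `H` takes only countably many values off `K`. Thus `H '' [0,T]` is a null set,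
but it is also an interval, being a continuous image of `[0,T]`; so it is a single point.
-/

theorem HolderOnWith.of_dist_le_mul_rpow {X Y : Type*} [PseudoMetricSpace X]
    [PseudoMetricSpace Y] {f : X → Y} {A : Set X} {C r : ℝ} (hr : 0 ≤ r)
    (h : ∀ x ∈ A, ∀ y ∈ A, dist (f x) (f y) ≤ C * dist x y ^ r) :
    HolderOnWith C.toNNReal r.toNNReal f A := by
  intro x hx y hy
  rw [edist_dist, edist_dist, Real.coe_toNNReal r hr, ENNReal.ofReal_rpow_of_nonneg dist_nonneg hr,
    ← ENNReal.ofReal_coe_nnreal, ← ENNReal.ofReal_mul (by positivity)]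
  exact ENNReal.ofReal_le_ofReal <|
    (h x hx y hy).trans (mul_le_mul_of_nonneg_right (Real.le_coe_toNNReal C) (by positivity))

theorem HolderOnWith.volume_image_eq_zero {X : Type*} [EMetricSpace X] [MeasurableSpace X]
    [BorelSpace X] {f : X → ℝ} {C r : NNReal} {s : Set X} (h : HolderOnWith C r f s)
    (hr : 0 < r) (hs : μH[r] s = 0) : volume (f '' s) = 0 := by
  have := h.hausdorffMeasure_image_le hr zero_le_one
  rwa [mul_one, hs, mul_zero, nonpos_iff_eq_zero, hausdorffMeasure_real] at this

theorem countable_image_of_eventually_eq_nhdsWithin {X β : Type*} [TopologicalSpace X]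
    [TopologicalSpace.PseudoMetrizableSpace X] [TopologicalSpace.SeparableSpace X]
    {f : X → β} {s A : Set X} (hsA : s ⊆ A) (h : ∀ x ∈ s, ∀ᶠ y in 𝓝[A] x, f y = f x) :
    (f '' s).Countable := by
  obtain ⟨D, hDA, hDc, hAD⟩ :=
    (TopologicalSpace.IsSeparable.of_separableSpace A).exists_countable_dense_subset
  refine (hDc.image f).mono ?_
  rintro _ ⟨x, hx, rfl⟩
  have := mem_closure_iff_nhdsWithin_neBot.1 (hAD (hsA hx))
  have hD : ∀ᶠ y in 𝓝[D] x, f y = f x := nhdsWithin_mono x hDA (h x hx)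
  obtain ⟨y, hyx, hyD⟩ := (hD.and self_mem_nhdsWithin).exists
  exact ⟨y, hyD, hyx⟩

theorem Set.OrdConnected.subsingleton_of_volume_eq_zero {s : Set ℝ} (hs : s.OrdConnected)
    (h0 : volume s = 0) : s.Subsingleton := by
  intro a ha b hb
  have := measure_mono_null (hs.uIcc_subset ha hb) h0
  rw [Real.volume_interval, ENNReal.ofReal_eq_zero, abs_nonpos_iff, sub_eq_zero] at this
  exact this.symm

theorem stmt15_general (T σ CH : ℝ) (hσ : σ ∈ Set.Ioc (0 : ℝ) 1)
    (H : ℝ → ℝ)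
    (hHol : ∀ s ∈ Set.Icc (0 : ℝ) T, ∀ t ∈ Set.Icc (0 : ℝ) T,
      |H t - H s| ≤ CH * |t - s| ^ σ)
    (K : Set ℝ) (hKsub : K ⊆ Set.Ioo 0 T)
    -- H is locally constant on [0,T] outside K
    (hloc : ∀ t ∈ Set.Icc (0 : ℝ) T, t ∉ K →
      ∃ ε > 0, ∀ s ∈ Set.Icc (0 : ℝ) T, |s - t| < ε → H s = H t)
    (hdim : dimH K < ENNReal.ofReal σ) :
    ∀ t ∈ Set.Icc (0 : ℝ) T, H t = H 0 := by
  have hσ0 : 0 < σ.toNNReal := Real.toNNReal_pos.2 hσ.1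
  have hHolOn : HolderOnWith CH.toNNReal σ.toNNReal H (Icc 0 T) :=
    .of_dist_le_mul_rpow hσ.1.le fun s hs t ht => hHol t ht s hs
  have hKI : K ⊆ Icc 0 T := hKsub.trans Ioo_subset_Icc_self
  have hK : volume (H '' K) = 0 :=
    (hHolOn.mono hKI).volume_image_eq_zero hσ0 (hausdorffMeasure_of_dimH_lt hdim)
  have hoff : (H '' (Icc 0 T \ K)).Countable :=
    countable_image_of_eventually_eq_nhdsWithin sdiff_subset fun t ht => by
      obtain ⟨ε, hε, hconst⟩ := hloc t ht.1 ht.2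
      exact Metric.mem_nhdsWithin_iff.2 ⟨ε, hε, fun s hs => hconst s hs.2 hs.1⟩
  have himg : volume (H '' Icc 0 T) = 0 := by
    rw [← union_sdiff_cancel hKI, image_union]
    exact measure_union_null hK (hoff.measure_zero _)
  have hconn : (H '' Icc 0 T).OrdConnected :=
    (isPreconnected_Icc.image H (hHolOn.continuousOn hσ0)).ordConnected
  intro t ht
  exact hconn.subsingleton_of_volume_eq_zero himg ⟨t, ht, rfl⟩ ⟨0, ⟨le_rfl, ht.1.trans ht.2⟩, rfl⟩

/-- a `σ`-Hölder continuous function on `[0,T]` that is locally constant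
outside a closed set `K ⊆ (0,T)` (the support of its distributional derivative) of
Hausdorff dimension strictly less than `σ` is constant on `[0,T]`. -/
theorem stmt15 (T σ CH : ℝ) (hT : 0 < T) (hσ : σ ∈ Set.Ioc (0 : ℝ) 1)
    (H : ℝ → ℝ)
    (hHol : ∀ s ∈ Set.Icc (0 : ℝ) T, ∀ t ∈ Set.Icc (0 : ℝ) T,
      |H t - H s| ≤ CH * |t - s| ^ σ)
    (K : Set ℝ) (hKclosed : IsClosed K) (hKsub : K ⊆ Set.Ioo 0 T)
    -- H is locally constant on [0,T] outside K
    (hloc : ∀ t ∈ Set.Icc (0 : ℝ) T, t ∉ K →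
      ∃ ε > 0, ∀ s ∈ Set.Icc (0 : ℝ) T, |s - t| < ε → H s = H t)
    (hdim : dimH K < ENNReal.ofReal σ) :
    ∀ t ∈ Set.Icc (0 : ℝ) T, H t = H 0 :=
  stmt15_general T σ CH hσ H hHol K hKsub hloc hdim
end
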